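/- arXiv:1804.11100 — 9 statements merged into one kernel-verified Lean document; each statement's English description precedes it below -/
import Mathlib

section
/- Let S be an idempotent commutative semiring and let V be a subsemigroup of the n×n matrix monoid over S such that every element of V has all diagonal entries equal to 1. If A = U(1)·X(1)·U(2)···U(L)·X(L)·U(L+1) and B = X(1)···X(L) with all U(i), X(i) in V, then B ⪯ A (entrywise in the natural order on S). -/
section Aux

variable {S : Type*} [CommSemiring S]

private def sle (a b : S) : Prop := a + b = b

private lemma sle_mul (hidem : ∀ a : S, a + a = a) {a b c d : S}
    (h1 : sle a b) (h2 : sle c d) : sle (a * c) (b * d) := by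
  unfold sle at *
  calc a * c + b * d = a * c + (a + b) * (c + d) := by rw [h1, h2]
    _ = (a * c + a * c) + (a * d + b * c + b * d) := by ring
    _ = a * c + (a * d + b * c + b * d) := by rw [hidem]
    _ = (a + b) * (c + d) := by ring
    _ = b * d := by rw [h1, h2]

private lemma sle_sum (hidem : ∀ a : S, a + a = a) {ι : Type*} (s : Finset ι)
    (f g : ι → S) (h : ∀ i ∈ s, sle (f i) (g i)) :
    sle (∑ i ∈ s, f i) (∑ i ∈ s, g i) := by
  classical
  induction s using Finset.cons_induction with
  | empty => simp [sle]
  | cons a s hx ih =>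
      rw [Finset.sum_cons, Finset.sum_cons]
      have h1 := h a (Finset.mem_cons_self a s)
      have h2 := ih (fun i hi => h i (Finset.mem_cons_of_mem hi))
      unfold sle at *
      calc f a + ∑ i ∈ s, f i + (g a + ∑ i ∈ s, g i)
          = (f a + g a) + (∑ i ∈ s, f i + ∑ i ∈ s, g i) := by ring
        _ = g a + ∑ i ∈ s, g i := by rw [h1, h2]

variable {n : ℕ}

private def mle (M N : Matrix (Fin n) (Fin n) S) : Prop := ∀ i j, sle (M i j) (N i j)

private lemma mle_mul (hidem : ∀ a : S, a + a = a) {M N P Q : Matrix (Fin n) (Fin n) S}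
    (h1 : mle M N) (h2 : mle P Q) : mle (M * P) (N * Q) := by
  intro i j
  rw [Matrix.mul_apply, Matrix.mul_apply]
  exact sle_sum hidem _ _ _ (fun k _ => sle_mul hidem (h1 i k) (h2 k j))

private lemma mle_refl (hidem : ∀ a : S, a + a = a) (M : Matrix (Fin n) (Fin n) S) :
    mle M M := fun i j => hidem _

private lemma mle_one (hidem : ∀ a : S, a + a = a) {M : Matrix (Fin n) (Fin n) S}
    (hd : ∀ i, M i i = 1) : mle 1 M := by
  intro i j
  by_cases h : i = j
  · subst h
    unfold sle
    rw [Matrix.one_apply_eq, hd i, hidem]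
  · unfold sle
    rw [Matrix.one_apply_ne h, zero_add]

private lemma mle_prod (hidem : ∀ a : S, a + a = a) :
    ∀ (m : ℕ) (f g : Fin m → Matrix (Fin n) (Fin n) S),
    (∀ k, mle (f k) (g k)) → mle (List.ofFn f).prod (List.ofFn g).prod := by
  intro m
  induction m with
  | zero => intro f g _; simpa using mle_refl hidem (1 : Matrix (Fin n) (Fin n) S)
  | succ m ih =>
      intro f g h
      rw [List.ofFn_succ, List.ofFn_succ, List.prod_cons, List.prod_cons]
      exact mle_mul hidem (h 0) (ih _ _ (fun k => h k.succ))

end Aux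

/-- Let `V` be a subsemigroup of `M_n(S)` (`S` an idempotent commutative semiring)
all of whose elements have all diagonal entries `1`. If
`A = U 0 * X 0 * U 1 * ⋯ * U (L-1) * X (L-1) * U L` and `B = X 0 * ⋯ * X (L-1)`
with all factors in `V`, then `B ⪯ A` entrywise. -/
theorem stmt_4 (S : Type*) [CommSemiring S] (hidem : ∀ a : S, a + a = a)
    (n L : ℕ) (V : Set (Matrix (Fin n) (Fin n) S))
    (hmul : ∀ A ∈ V, ∀ B ∈ V, A * B ∈ V)
    (hdiag : ∀ A ∈ V, ∀ i, A i i = 1)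
    (U : Fin (L + 1) → Matrix (Fin n) (Fin n) S)
    (X : Fin L → Matrix (Fin n) (Fin n) S)
    (hU : ∀ k, U k ∈ V) (hX : ∀ k, X k ∈ V)
    (A B : Matrix (Fin n) (Fin n) S)
    (hA : A = (List.ofFn fun k : Fin L => U k.castSucc * X k).prod * U (Fin.last L))
    (hB : B = (List.ofFn X).prod) :
    ∀ i j, B i j + A i j = A i j := by
  have hstep : ∀ k : Fin L, mle (X k) (U k.castSucc * X k) := by
    intro k
    have := mle_mul hidem (mle_one hidem (hdiag _ (hU k.castSucc))) (mle_refl hidem (X k))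
    rwa [one_mul] at this
  have hmain : mle B A := by
    rw [hA, hB]
    have : mle ((List.ofFn X).prod * 1)
        ((List.ofFn fun k : Fin L => U k.castSucc * X k).prod * U (Fin.last L)) :=
      mle_mul hidem (mle_prod hidem L _ _ hstep)
        (mle_one hidem (hdiag _ (hU (Fin.last L))))
    rwa [mul_one] at this
  exact hmain
end

section
/- Let S be an idempotent commutative semiring and let V be a subsemigroup of M_n(S) in which every matrix has all diagonal entries equal to 1. Then V is J-trivial: if A = P·B·Q and B = X·A·Y with P, Q, X, Y, A, B ∈ V (allowing identity factors), then A = B. -/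
/-- A subsemigroup of `M_n(S)` (`S` an idempotent commutative semiring) whose
elements all have all diagonal entries `1` is `J`-trivial: mutually divisible
elements (allowing identity factors) are equal. -/
theorem stmt_6 (S : Type*) [CommSemiring S] (hidem : ∀ a : S, a + a = a)
    (n : ℕ) (V : Set (Matrix (Fin n) (Fin n) S))
    (hmul : ∀ A ∈ V, ∀ B ∈ V, A * B ∈ V)
    (hdiag : ∀ A ∈ V, ∀ i, A i i = 1)
    (A B P Q X Y : Matrix (Fin n) (Fin n) S)
    (hA : A ∈ V) (hB : B ∈ V)
    (hP : P ∈ V ∨ P = 1) (hQ : Q ∈ V ∨ Q = 1)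
    (hX : X ∈ V ∨ X = 1) (hY : Y ∈ V ∨ Y = 1)
    (h1 : A = P * B * Q) (h2 : B = X * A * Y) :
    A = B := by
  have one_diag : ∀ M : Matrix (Fin n) (Fin n) S, M ∈ V ∨ M = 1 → ∀ i, M i i = 1 := by
    rintro M (hM | rfl) i
    · exact hdiag M hM i
    · simp
  have key : ∀ (P Q C : Matrix (Fin n) (Fin n) S), (∀ i, P i i = 1) →
      (∀ i, Q i i = 1) → ∀ i j, C i j + (P * C * Q) i j = (P * C * Q) i j := by
    intro P Q C hP hQ i j
    rw [Matrix.mul_apply, ← Finset.add_sum_erase _ _ (Finset.mem_univ j), hQ j, mul_one,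
      Matrix.mul_apply, ← Finset.add_sum_erase _ _ (Finset.mem_univ i), hP i, one_mul,
      ← add_assoc, ← add_assoc, hidem]
  have hBA := key P Q B (one_diag P hP) (one_diag Q hQ)
  have hAB := key X Y A (one_diag X hX) (one_diag Y hY)
  ext i j
  have e1 : B i j + A i j = A i j := by rw [h1]; exact hBA i j
  have e2 : A i j + B i j = B i j := by rw [h2]; exact hAB i j
  calc A i j = B i j + A i j := e1.symm
    _ = B i j := by rw [add_comm]; exact e2
end

section
/- Let S be an interval semiring and let A ∈ R_n(S) (an n×n matrix over S with all diagonal entries 1). Then for all N ≥ n−1, A^N = A^{n−1}. In particular A^{n−1} is idempotent. -/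
namespace Stmt8Aux

variable {S : Type*} [CommSemiring S] {n : ℕ}

/-- Weight of a path starting at `a` through the vertex list `l`. -/
def pw (A : Matrix (Fin n) (Fin n) S) : Fin n → List (Fin n) → S
  | _, [] => 1
  | a, b :: l => A a b * pw A b l

lemma pw_nil (A : Matrix (Fin n) (Fin n) S) (a : Fin n) : pw A a [] = 1 := rfl

lemma pw_cons (A : Matrix (Fin n) (Fin n) S) (a b : Fin n) (l : List (Fin n)) :
    pw A a (b :: l) = A a b * pw A b l := rfl

lemma pw_append (A : Matrix (Fin n) (Fin n) S) (b : Fin n) (l1 : List (Fin n)) :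
    ∀ (a : Fin n) (l2 : List (Fin n)),
      pw A a (l1 ++ b :: l2) = pw A a (l1 ++ [b]) * pw A b l2 := by
  induction l1 with
  | nil => intro a l2; simp only [List.nil_append, pw_cons, pw_nil, mul_one]
  | cons c l1 ih =>
    intro a l2
    rw [List.cons_append, pw_cons, ih, List.cons_append, pw_cons, ← mul_assoc]

/-- Path-sum representation of matrix powers. -/
lemma rep (A : Matrix (Fin n) (Fin n) S) : ∀ (m : ℕ) (i j : Fin n),
    (A ^ (m + 1)) i j = ∑ p : Fin m → Fin n, pw A i (List.ofFn p ++ [j]) := by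
  intro m
  induction m with
  | zero =>
    intro i j
    simp [pw_cons, pw_nil, List.ofFn_zero]
  | succ m ih =>
    intro i j
    rw [pow_succ', Matrix.mul_apply]
    have e : ∀ q : Fin n × (Fin m → Fin n),
        A i q.1 * pw A q.1 (List.ofFn q.2 ++ [j])
          = pw A i (List.ofFn (Fin.cons q.1 q.2 : Fin (m+1) → Fin n) ++ [j]) := by
      intro q
      rw [List.ofFn_succ]
      simp [pw_cons, Fin.cons_zero, Fin.cons_succ]
    calc ∑ k, A i k * (A ^ (m + 1)) k j
        = ∑ k, ∑ p : Fin m → Fin n, A i k * pw A k (List.ofFn p ++ [j]) := by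
          simp_rw [ih, Finset.mul_sum]
      _ = ∑ q : Fin n × (Fin m → Fin n),
            A i q.1 * pw A q.1 (List.ofFn q.2 ++ [j]) :=
          (Fintype.sum_prod_type
            (f := fun q : Fin n × (Fin m → Fin n) =>
              A i q.1 * pw A q.1 (List.ofFn q.2 ++ [j]))).symm
      _ = ∑ q : Fin n × (Fin m → Fin n),
            pw A i (List.ofFn (Fin.cons q.1 q.2 : Fin (m+1) → Fin n) ++ [j]) :=
          Finset.sum_congr rfl fun q _ => e q
      _ = ∑ p : Fin (m + 1) → Fin n, pw A i (List.ofFn p ++ [j]) :=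
          Fintype.sum_equiv (Fin.consEquiv fun _ => Fin n)
            _ _ (fun q => rfl)

section Order

lemma le_trans' {a b c : S} (h1 : a + b = b) (h2 : b + c = c) : a + c = c := by
  rw [← h2, ← add_assoc, h1]

lemma mul_le_right (htop : ∀ a : S, a + 1 = 1) (c d : S) : c * d + d = d := by
  calc c * d + d = (c + 1) * d := by rw [add_mul, one_mul]
    _ = d := by rw [htop, one_mul]

lemma mul_le_mul_left' {d e : S} (c : S) (h : d + e = e) : c * d + c * e = c * e := by
  rw [← mul_add, h]

lemma le_sum (hidem : ∀ a : S, a + a = a) {α : Type*} [DecidableEq α]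
    (s : Finset α) (f : α → S) {a : α} (ha : a ∈ s) :
    f a + ∑ x ∈ s, f x = ∑ x ∈ s, f x := by
  rw [← Finset.add_sum_erase s f ha, ← add_assoc, hidem]

lemma sum_le {α : Type*} (s : Finset α) (f : α → S) (b : S) (h : ∀ a ∈ s, f a + b = b) :
    (∑ x ∈ s, f x) + b = b := by
  induction s using Finset.cons_induction with
  | empty => simp
  | cons a s ha ih =>
    rw [Finset.sum_cons, add_assoc, ih fun x hx => h x (Finset.mem_cons_of_mem hx),
      h a (Finset.mem_cons_self a s)]

variable (A : Matrix (Fin n) (Fin n) S)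

lemma pow_le_succ (hidem : ∀ a : S, a + a = a) (hA : ∀ i, A i i = 1) (m : ℕ) (i j : Fin n) :
    (A ^ m) i j + (A ^ (m + 1)) i j = (A ^ (m + 1)) i j := by
  rw [pow_succ, Matrix.mul_apply]
  have := le_sum hidem Finset.univ (fun k => (A ^ m) i k * A k j) (Finset.mem_univ j)
  simp only [hA j, mul_one] at this
  exact this

lemma pow_mono (hidem : ∀ a : S, a + a = a) (hA : ∀ i, A i i = 1) {k l : ℕ} (h : k ≤ l) (i j : Fin n) :
    (A ^ k) i j + (A ^ l) i j = (A ^ l) i j := by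
  induction l, h using Nat.le_induction with
  | base => exact hidem _
  | succ l hl ih => exact le_trans' ih (pow_le_succ A hidem hA l i j)

/-- A path weight with endpoint `j` is dominated by the corresponding power entry. -/
lemma term_le (hidem : ∀ a : S, a + a = a) (T₀ : List (Fin n)) (i j : Fin n) :
    pw A i (T₀ ++ [j]) + (A ^ (T₀.length + 1)) i j = (A ^ (T₀.length + 1)) i j := by
  rw [rep]
  have := le_sum hidem Finset.univ
    (fun p : Fin T₀.length → Fin n => pw A i (List.ofFn p ++ [j]))
    (Finset.mem_univ T₀.get)
  simp only [List.ofFn_get] at this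
  exact this

end Order

/-- A list containing a duplicate splits around the duplicated element. -/
lemma sublist_split {α : Type*} {x : α} :
    ∀ {l : List α}, List.Sublist [x, x] l → ∃ l1 l2 l3, l = l1 ++ x :: l2 ++ x :: l3 := by
  intro l h
  induction l with
  | nil => exact absurd (List.eq_nil_of_sublist_nil h) (by simp)
  | cons y t ih =>
    rcases h with _ | h | h
    · -- cons case: [x,x] <+ t
      next h =>
        obtain ⟨l1, l2, l3, rfl⟩ := ih h
        exact ⟨y :: l1, l2, l3, rfl⟩
    · -- cons₂ case: y = x and [x] <+ t
      next h =>
        have hx : x ∈ t := h.subset (by simp)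
        obtain ⟨s, t2, rfl⟩ := List.append_of_mem hx
        exact ⟨[], s, t2, rfl⟩

end Stmt8Aux

open Stmt8Aux in
/-- Over an interval semiring, any matrix with all diagonal entries `1`
satisfies `A^N = A^(n-1)` for all `N ≥ n-1`; in particular `A^(n-1)` is
idempotent. -/
theorem stmt_8 (S : Type*) [CommSemiring S] (hidem : ∀ a : S, a + a = a)
    (htop : ∀ a : S, a + 1 = 1) (n : ℕ)
    (A : Matrix (Fin n) (Fin n) S) (hA : ∀ i, A i i = 1) :
    (∀ N : ℕ, n - 1 ≤ N → A ^ N = A ^ (n - 1)) ∧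
    A ^ (n - 1) * A ^ (n - 1) = A ^ (n - 1) := by
  -- Key step: for m ≥ n - 1, A^(m+1) ≤ A^m entrywise.
  have step_le : ∀ m : ℕ, n ≤ m + 1 → ∀ i j : Fin n,
      (A ^ (m + 1)) i j + (A ^ m) i j = (A ^ m) i j := by
    intro m hm i j
    rw [rep]
    apply sum_le
    intro p _
    set T : List (Fin n) := List.ofFn p ++ [j] with hT
    have hlen : T.length = m + 1 := by simp [hT]
    have hTend : T.getLast? = some j := by simp [hT]
    -- the full vertex list i :: T has length m + 2 > n, so it has a duplicate
    have hnd : ¬ (i :: T).Nodup := by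
      intro h
      have hc := h.length_le_card
      simp only [List.length_cons, hlen, Fintype.card_fin] at hc
      omega
    obtain ⟨x, hx⟩ := List.exists_duplicate_iff_not_nodup.mpr hnd
    obtain ⟨F1, F2, F3, hF⟩ := sublist_split (List.duplicate_iff_sublist.mp hx)
    -- helper: bound a weight of a path (T₀ ++ [j]) of length ≤ m by (A^m) i j
    have bound : ∀ (c : S) (T₀ : List (Fin n)), T₀.length + 1 ≤ m →
        (c + pw A i (T₀ ++ [j]) = pw A i (T₀ ++ [j])) → c + (A ^ m) i j = (A ^ m) i j := by
      intro c T₀ hlen' hc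
      exact le_trans' hc (le_trans' (term_le A hidem T₀ i j)
        (pow_mono A hidem hA hlen' i j))
    cases F1 with
    | nil =>
      -- x = i and T = F2 ++ x :: F3
      have hxi : x = i := by simpa using (List.head_eq_of_cons_eq hF.symm)
      have hT2 : T = F2 ++ x :: F3 := List.tail_eq_of_cons_eq hF.symm |>.symm
      obtain rfl : i = x := hxi.symm
      rcases F3.eq_nil_or_concat with rfl | ⟨F3', y, rfl⟩
      · -- T = F2 ++ [i], so j = i; pw A i T ≤ 1 = (A^0) i j ≤ (A^m) i j
        have hji : j = i := by
          have := hTend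
          rw [hT2, List.getLast?_concat] at this
          exact (Option.some_inj.mp this).symm
        have h1 : pw A i T + 1 = 1 := htop _
        have h0 : ((A ^ 0 : Matrix (Fin n) (Fin n) S)) i j = 1 := by
          rw [pow_zero, hji]; exact Matrix.one_apply_eq i
        exact le_trans' (by rw [← h0] at h1; exact h1) (pow_mono A hidem hA (Nat.zero_le m) i j)
      · -- F3 = F3' ++ [y]; last of T is y = j
        simp only [List.concat_eq_append] at hT2
        have hyj : y = j := by
          have := hTend
          rw [hT2] at this
          rw [show F2 ++ i :: (F3' ++ [y]) = (F2 ++ i :: F3') ++ [y] by simp, List.getLast?_concat] at this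
          exact Option.some_inj.mp this
        obtain rfl : j = y := hyj.symm
        -- pw A i T = pw A i (F2 ++ [i]) * pw A i (F3' ++ [j]) ≤ pw A i (F3' ++ [j])
        have hsplit : pw A i T = pw A i (F2 ++ [i]) * pw A i (F3' ++ [j]) := by
          rw [hT2, pw_append]
        have hle : pw A i T + pw A i (F3' ++ [j]) = pw A i (F3' ++ [j]) := by
          rw [hsplit]; exact mul_le_right htop _ _
        have hlen3 : F3'.length + 1 ≤ m := by
          have := congrArg List.length hT2
          simp only [hlen, List.length_append, List.length_cons] at this
          omega
        exact bound _ F3' hlen3 hle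
    | cons y F1' =>
      -- y = i and T = F1' ++ x :: F2 ++ x :: F3
      have hyi : y = i := List.head_eq_of_cons_eq hF.symm
      have hT2 : T = F1' ++ x :: F2 ++ x :: F3 := List.tail_eq_of_cons_eq hF.symm |>.symm
      rcases F3.eq_nil_or_concat with rfl | ⟨F3', z, rfl⟩
      · -- x = j; shorten to F1' ++ [x]
        have hxj : x = j := by
          have := hTend
          rw [hT2, show F1' ++ x :: F2 ++ [x] = (F1' ++ x :: F2) ++ [x] by simp,
            List.getLast?_concat] at this
          exact Option.some_inj.mp this
        obtain rfl : j = x := hxj.symm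
        have hsplit : pw A i T = pw A i (F1' ++ [j]) * pw A j (F2 ++ [j]) := by
          rw [hT2, show F1' ++ j :: F2 ++ [j] = F1' ++ j :: (F2 ++ [j]) by simp, pw_append,
            pw_append, pw_nil, mul_one]
        have hle : pw A i T + pw A i (F1' ++ [j]) = pw A i (F1' ++ [j]) := by
          rw [hsplit, mul_comm]; exact mul_le_right htop _ _
        have hlen3 : F1'.length + 1 ≤ m := by
          have := congrArg List.length hT2
          simp only [hlen, List.length_append, List.length_cons] at this
          omega
        exact bound _ F1' hlen3 hle
      · -- F3 = F3' ++ [z]; z = j; shorten to F1' ++ x :: F3' ++ [j]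
        simp only [List.concat_eq_append] at hT2
        have hzj : z = j := by
          have := hTend
          rw [hT2, show F1' ++ x :: F2 ++ x :: (F3' ++ [z])
              = (F1' ++ x :: F2 ++ x :: F3') ++ [z] by simp,
            List.getLast?_concat] at this
          exact Option.some_inj.mp this
        obtain rfl : j = z := hzj.symm
        have e1 : pw A i (F1' ++ x :: (F2 ++ x :: (F3' ++ [j])))
            = pw A i (F1' ++ [x]) * pw A x (F2 ++ x :: (F3' ++ [j])) :=
          pw_append A x F1' i _
        have e2 : pw A x (F2 ++ x :: (F3' ++ [j]))
            = pw A x (F2 ++ [x]) * pw A x (F3' ++ [j]) :=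
          pw_append A x F2 x _
        have hsplit : pw A i T
            = pw A i (F1' ++ [x]) * (pw A x (F2 ++ [x]) * pw A x (F3' ++ [j])) := by
          rw [hT2, show F1' ++ x :: F2 ++ x :: (F3' ++ [j])
              = F1' ++ x :: (F2 ++ x :: (F3' ++ [j])) by simp, e1, e2]
        have hshort : pw A i ((F1' ++ x :: F3') ++ [j])
            = pw A i (F1' ++ [x]) * pw A x (F3' ++ [j]) := by
          rw [show (F1' ++ x :: F3') ++ [j] = F1' ++ x :: (F3' ++ [j]) by simp]
          exact pw_append A x F1' i _
        have hle : pw A i T + pw A i ((F1' ++ x :: F3') ++ [j])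
            = pw A i ((F1' ++ x :: F3') ++ [j]) := by
          rw [hsplit, hshort]
          exact mul_le_mul_left' _ (mul_le_right htop _ _)
        have hlen3 : (F1' ++ x :: F3').length + 1 ≤ m := by
          have := congrArg List.length hT2
          simp only [hlen, List.length_append, List.length_cons] at this
          simp only [List.length_append, List.length_cons]
          omega
        exact bound _ (F1' ++ x :: F3') hlen3 hle
  -- stabilization: for m ≥ n - 1, A^(m+1) = A^m
  have stab : ∀ m : ℕ, n ≤ m + 1 → A ^ (m + 1) = A ^ m := by
    intro m hm
    funext i j
    have h1 := step_le m hm i j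
    have h2 := pow_le_succ A hidem hA m i j
    calc (A ^ (m + 1)) i j = (A ^ m) i j + (A ^ (m + 1)) i j := h2.symm
      _ = (A ^ (m + 1)) i j + (A ^ m) i j := add_comm _ _
      _ = (A ^ m) i j := h1
  have main : ∀ N : ℕ, n - 1 ≤ N → A ^ N = A ^ (n - 1) := by
    intro N hN
    induction N, hN using Nat.le_induction with
    | base => rfl
    | succ N hN ih => rw [stab N (by omega), ih]
  refine ⟨main, ?_⟩
  rw [← pow_add]
  exact main _ (by omega)
end

section
/- Let S be an interval semiring, let A = X(1)···X(L) be a product of matrices in R_n(S), and let i, j ∈ [n]. Then A_{i,j} equals the sum over all block chains ρ = (ρ_0,…,ρ_L) with ρ_0 = i, ρ_L = j of the products X(1)_{ρ_0,ρ_1}···X(L)_{ρ_{L−1},ρ_L}, where a block chain is a tuple consisting of consecutive constant blocks with pairwise distinct block values. -/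
open scoped Classical

/-- A block chain: a tuple consisting of consecutive constant blocks with
pairwise distinct block values. Equivalently, whenever two entries are equal,
all entries between them are equal to that common value. -/
def IsBlockChain {n L : ℕ} (ρ : Fin (L + 1) → Fin n) : Prop :=
  ∀ s t k : Fin (L + 1), s ≤ k → k ≤ t → ρ s = ρ t → ρ k = ρ s


private lemma rle_trans' {S : Type*} [CommSemiring S] {a b c : S} (h1 : a + b = b)
    (h2 : b + c = c) : a + c = c := by
  rw [← h2, ← add_assoc, h1]

private lemma rle_mul' {S : Type*} [CommSemiring S] {a b c d : S} (h1 : a + b = b)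
    (h2 : c + d = d) : a * c + b * d = b * d := by
  have h3 : a * c + b * c = b * c := by rw [← add_mul, h1]
  have h4 : b * c + b * d = b * d := by rw [← mul_add, h2]
  exact rle_trans' h3 h4

private lemma rle_prod' {S : Type*} [CommSemiring S] (hidem : ∀ a : S, a + a = a)
    {ι : Type*} (s : Finset ι) (f g : ι → S) (h : ∀ k ∈ s, f k + g k = g k) :
    (∏ k ∈ s, f k) + ∏ k ∈ s, g k = ∏ k ∈ s, g k := by
  induction s using Finset.induction_on with
  | empty => simpa using hidem 1
  | insert a s' hx ih =>
    rw [Finset.prod_insert hx, Finset.prod_insert hx]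
    exact rle_mul' (h a (Finset.mem_insert_self a s'))
      (ih fun k hk => h k (Finset.mem_insert_of_mem hk))

/-- One flattening step: a non-block-chain path is absorbed by a path with
strictly fewer descents. -/
private lemma flatten_step {S : Type*} [CommSemiring S] (hidem : ∀ a : S, a + a = a)
    (htop : ∀ a : S, a + 1 = 1) {n L : ℕ} (X : Fin L → Matrix (Fin n) (Fin n) S)
    (hX : ∀ k i, X k i i = 1) (ρ : Fin (L + 1) → Fin n) (hbc : ¬ IsBlockChain ρ) :
    ∃ σ : Fin (L + 1) → Fin n, σ 0 = ρ 0 ∧ σ (Fin.last L) = ρ (Fin.last L) ∧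
      (Finset.univ.filter fun m : Fin L => σ m.castSucc ≠ σ m.succ).card <
        (Finset.univ.filter fun m : Fin L => ρ m.castSucc ≠ ρ m.succ).card ∧
      (∏ k : Fin L, X k (ρ k.castSucc) (ρ k.succ)) +
        (∏ k : Fin L, X k (σ k.castSucc) (σ k.succ)) =
        ∏ k : Fin L, X k (σ k.castSucc) (σ k.succ) := by
  simp only [IsBlockChain, not_forall] at hbc
  obtain ⟨s, t, k, hsk, hkt, hst, hk⟩ := hbc
  refine ⟨fun m => if s ≤ m ∧ m ≤ t then ρ s else ρ m, ?_, ?_, ?_, ?_⟩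
  · -- value at 0
    dsimp only
    split_ifs with h
    · rw [Fin.le_zero_iff.mp h.1]
    · rfl
  · -- value at last
    dsimp only
    split_ifs with h
    · rw [hst]
      congr 1
      exact le_antisymm (Fin.le_last t) h.2
    · rfl
  · -- descent count strictly decreases
    -- first: the edge-case trichotomy
    have edge : ∀ m : Fin L,
        ((if s ≤ m.castSucc ∧ m.castSucc ≤ t then ρ s else ρ m.castSucc) = ρ m.castSucc ∧
         (if s ≤ m.succ ∧ m.succ ≤ t then ρ s else ρ m.succ) = ρ m.succ) ∨
        ((if s ≤ m.castSucc ∧ m.castSucc ≤ t then ρ s else ρ m.castSucc) =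
         (if s ≤ m.succ ∧ m.succ ≤ t then ρ s else ρ m.succ)) := by
      intro m
      by_cases h1 : s ≤ m.castSucc ∧ m.castSucc ≤ t <;>
        by_cases h2 : s ≤ m.succ ∧ m.succ ≤ t
      · right; rw [if_pos h1, if_pos h2]
      · -- m.castSucc ∈ [s,t], m.succ ∉ : then t = m.castSucc
        left
        rw [if_pos h1, if_neg h2]
        have hsb : s ≤ m.succ := le_trans h1.1 (le_of_lt (Fin.castSucc_lt_succ (i := m)))
        have hbt : ¬ m.succ ≤ t := fun hh => h2 ⟨hsb, hh⟩
        have ht : t = m.castSucc := by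
          apply Fin.ext
          have h1' : m.castSucc.val ≤ t.val := h1.2
          have h2' : t.val < m.succ.val := by
            have := Fin.lt_iff_val_lt_val.mp (lt_of_not_ge hbt)
            exact this
          simp only [Fin.val_succ, Fin.coe_castSucc] at h1' h2' ⊢
          omega
        refine ⟨?_, rfl⟩
        rw [hst, ht]
      · -- m.succ ∈ [s,t], m.castSucc ∉ : then s = m.succ
        left
        rw [if_neg h1, if_pos h2]
        have hat : m.castSucc ≤ t := le_trans (le_of_lt (Fin.castSucc_lt_succ (i := m))) h2.2
        have hsa : ¬ s ≤ m.castSucc := fun hh => h1 ⟨hh, hat⟩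
        have hs : s = m.succ := by
          apply Fin.ext
          have h2' : s.val ≤ m.succ.val := h2.1
          have h1' : m.castSucc.val < s.val := Fin.lt_iff_val_lt_val.mp (lt_of_not_ge hsa)
          simp only [Fin.val_succ, Fin.coe_castSucc] at h1' h2' ⊢
          omega
        exact ⟨rfl, by rw [hs]⟩
      · left; rw [if_neg h1, if_neg h2]; exact ⟨rfl, rfl⟩
    refine Finset.card_lt_card ?_
    rw [Finset.ssubset_iff_of_subset]
    · -- find a descent of ρ inside [s,t) killed by flattening
      -- first find an interior descent
      have hne : ∃ m : Fin L, s ≤ m.castSucc ∧ m.succ ≤ t ∧ ρ m.castSucc ≠ ρ m.succ := by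
        by_contra hno
        push_neg at hno
        have key : ∀ c : ℕ, ∀ hcL : c < L + 1, s.val ≤ c → c ≤ t.val →
            ρ ⟨c, hcL⟩ = ρ s := by
          intro c
          induction c with
          | zero =>
            intro hcL h1 h2
            have : s = ⟨0, hcL⟩ := Fin.ext (Nat.le_zero.mp h1)
            rw [← this]
          | succ c ih =>
            intro hcL h1 h2
            rcases Nat.lt_or_ge s.val (c + 1) with hs' | hs'
            · have hcL' : c < L := by omega
              have hcL'' : c < L + 1 := by omega
              have e := hno ⟨c, hcL'⟩
                (by rw [Fin.le_def]; simp only [Fin.coe_castSucc]; omega)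
                (by rw [Fin.le_def]; simp only [Fin.val_succ]; omega)
              have hc1 : (⟨c + 1, hcL⟩ : Fin (L + 1)) = Fin.succ ⟨c, hcL'⟩ := rfl
              have hc0 : Fin.castSucc (⟨c, hcL'⟩ : Fin L) = (⟨c, hcL''⟩ : Fin (L + 1)) := rfl
              rw [hc1, ← e, hc0]
              exact ih hcL'' (by omega) (by omega)
            · have : s = ⟨c + 1, hcL⟩ := Fin.ext (show s.val = c + 1 by omega)
              rw [← this]
        have hks : ρ k = ρ s := by
          have := key k.val k.isLt (Fin.le_def.mp hsk) (Fin.le_def.mp hkt)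
          simpa using this
        exact hk hks
      obtain ⟨m, hm1, hm2, hm3⟩ := hne
      refine ⟨m, Finset.mem_filter.mpr ⟨Finset.mem_univ m, hm3⟩, fun hmem => ?_⟩
      have := (Finset.mem_filter.mp hmem).2
      apply this
      dsimp only
      rw [if_pos ⟨hm1, le_trans (le_of_lt (Fin.castSucc_lt_succ (i := m))) hm2⟩,
        if_pos ⟨le_trans hm1 (le_of_lt (Fin.castSucc_lt_succ (i := m))), hm2⟩]
    · -- subset
      intro m hm
      rw [Finset.mem_filter] at hm ⊢
      refine ⟨Finset.mem_univ m, fun hh => hm.2 ?_⟩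
      rcases edge m with ⟨e1, e2⟩ | e
      · dsimp only at *
        rw [e1, e2]
        exact hh
      · exact e
  · -- absorption of products
    apply rle_prod' hidem
    intro m _
    have : ∀ a b : Fin (L + 1),
        ((if s ≤ a ∧ a ≤ t then ρ s else ρ a) = ρ a ∧
         (if s ≤ b ∧ b ≤ t then ρ s else ρ b) = ρ b) ∨ True := fun _ _ => Or.inr trivial
    -- use the same edge trichotomy
    by_cases h1 : s ≤ m.castSucc ∧ m.castSucc ≤ t <;>
      by_cases h2 : s ≤ m.succ ∧ m.succ ≤ t
    · dsimp only
      rw [if_pos h1, if_pos h2, hX m (ρ s)]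
      exact htop _
    · dsimp only
      rw [if_pos h1, if_neg h2]
      have hsb : s ≤ m.succ := le_trans h1.1 (le_of_lt (Fin.castSucc_lt_succ (i := m)))
      have hbt : ¬ m.succ ≤ t := fun hh => h2 ⟨hsb, hh⟩
      have ht : t = m.castSucc := by
        apply Fin.ext
        have h1' : m.castSucc.val ≤ t.val := h1.2
        have h2' : t.val < m.succ.val := Fin.lt_iff_val_lt_val.mp (lt_of_not_ge hbt)
        simp only [Fin.val_succ, Fin.coe_castSucc] at h1' h2' ⊢
        omega
      rw [hst, ht]
      exact hidem _
    · dsimp only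
      rw [if_neg h1, if_pos h2]
      have hat : m.castSucc ≤ t := le_trans (le_of_lt (Fin.castSucc_lt_succ (i := m))) h2.2
      have hsa : ¬ s ≤ m.castSucc := fun hh => h1 ⟨hh, hat⟩
      have hs : s = m.succ := by
        apply Fin.ext
        have h2' : s.val ≤ m.succ.val := h2.1
        have h1' : m.castSucc.val < s.val := Fin.lt_iff_val_lt_val.mp (lt_of_not_ge hsa)
        simp only [Fin.val_succ, Fin.coe_castSucc] at h1' h2' ⊢
        omega
      rw [← hs]
      exact hidem _
    · dsimp only
      rw [if_neg h1, if_neg h2]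
      exact hidem _

private lemma rle_sum_le' {S : Type*} [CommSemiring S] {ι : Type*} (s : Finset ι) (f : ι → S)
    (c : S) (h : ∀ x ∈ s, f x + c = c) : (∑ x ∈ s, f x) + c = c := by
  induction s using Finset.induction_on with
  | empty => simp
  | insert a s' hx ih =>
    rw [Finset.sum_insert hx, add_assoc,
      ih fun k hk => h k (Finset.mem_insert_of_mem hk)]
    exact h a (Finset.mem_insert_self a s')

private lemma rle_le_sum' {S : Type*} [CommSemiring S] (hidem : ∀ a : S, a + a = a)
    {ι : Type*} (s : Finset ι) (f : ι → S) {x : ι} (hx : x ∈ s) :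
    f x + ∑ y ∈ s, f y = ∑ y ∈ s, f y := by
  have h := Finset.add_sum_erase s f hx
  calc f x + ∑ y ∈ s, f y = f x + (f x + ∑ y ∈ s.erase x, f y) := by rw [h]
    _ = (f x + f x) + ∑ y ∈ s.erase x, f y := (add_assoc _ _ _).symm
    _ = f x + ∑ y ∈ s.erase x, f y := by rw [hidem]
    _ = ∑ y ∈ s, f y := h

private lemma sum_absorb' {S : Type*} [CommSemiring S] (hidem : ∀ a : S, a + a = a)
    {ι : Type*} (T U : Finset ι) (f : ι → S) (hTU : T ⊆ U)
    (habs : ∀ x ∈ U, ∃ y ∈ T, f x + f y = f y) :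
    ∑ x ∈ U, f x = ∑ x ∈ T, f x := by
  have h1 : (∑ x ∈ U, f x) + ∑ x ∈ T, f x = ∑ x ∈ T, f x := by
    apply rle_sum_le'
    intro x hx
    obtain ⟨y, hy, h⟩ := habs x hx
    exact rle_trans' h (rle_le_sum' hidem _ _ hy)
  have h2 : (∑ x ∈ T, f x) + ∑ x ∈ U, f x = ∑ x ∈ U, f x := by
    apply rle_sum_le'
    intro x hx
    exact rle_le_sum' hidem _ _ (hTU hx)
  calc ∑ x ∈ U, f x = (∑ x ∈ T, f x) + ∑ x ∈ U, f x := h2.symm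
    _ = (∑ x ∈ U, f x) + ∑ x ∈ T, f x := add_comm _ _
    _ = ∑ x ∈ T, f x := h1

private lemma exists_bc {S : Type*} [CommSemiring S] (hidem : ∀ a : S, a + a = a)
    (htop : ∀ a : S, a + 1 = 1) {n L : ℕ} (X : Fin L → Matrix (Fin n) (Fin n) S)
    (hX : ∀ k i, X k i i = 1) :
    ∀ (N : ℕ) (ρ : Fin (L + 1) → Fin n),
      (Finset.univ.filter fun m : Fin L => ρ m.castSucc ≠ ρ m.succ).card ≤ N →
      ∃ σ : Fin (L + 1) → Fin n, IsBlockChain σ ∧ σ 0 = ρ 0 ∧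
        σ (Fin.last L) = ρ (Fin.last L) ∧
        (∏ k : Fin L, X k (ρ k.castSucc) (ρ k.succ)) +
          (∏ k : Fin L, X k (σ k.castSucc) (σ k.succ)) =
          ∏ k : Fin L, X k (σ k.castSucc) (σ k.succ) := by
  intro N
  induction N with
  | zero =>
    intro ρ hρ
    by_cases h : IsBlockChain ρ
    · exact ⟨ρ, h, rfl, rfl, hidem _⟩
    · obtain ⟨σ, -, -, hlt, -⟩ := flatten_step hidem htop X hX ρ h
      omega
  | succ N ih =>
    intro ρ hρ
    by_cases h : IsBlockChain ρ
    · exact ⟨ρ, h, rfl, rfl, hidem _⟩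
    · obtain ⟨σ, h0, hl, hlt, habs⟩ := flatten_step hidem htop X hX ρ h
      obtain ⟨τ, hτbc, hτ0, hτl, hτabs⟩ := ih σ (by omega)
      exact ⟨τ, hτbc, hτ0.trans h0, hτl.trans hl, rle_trans' habs hτabs⟩


private lemma pathSum {S : Type*} [CommSemiring S] {n : ℕ} :
    ∀ (L : ℕ) (X : Fin L → Matrix (Fin n) (Fin n) S) (i j : Fin n),
    ((List.ofFn X).prod) i j =
      ∑ ρ : Fin (L + 1) → Fin n,
        if ρ 0 = i ∧ ρ (Fin.last L) = j then
          ∏ k : Fin L, X k (ρ k.castSucc) (ρ k.succ) else 0 := by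
  intro L
  induction L with
  | zero =>
    intro X i j
    have he : (∑ ρ : Fin 1 → Fin n,
        if ρ 0 = i ∧ ρ (Fin.last 0) = j then
          ∏ k : Fin 0, X k (ρ k.castSucc) (ρ k.succ) else 0) =
        ∑ x : Fin n, if x = i ∧ x = j then 1 else 0 :=
      Fintype.sum_equiv (Equiv.funUnique (Fin 1) (Fin n)) _ _ (fun ρ => by
        simp [Equiv.funUnique, Fin.last])
    rw [he]
    by_cases h : i = j
    · subst h
      simp [Matrix.one_apply]
    · simp only [List.ofFn_zero, List.prod_nil, Matrix.one_apply, if_neg h]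
      rw [Finset.sum_eq_zero]
      intro x _
      rw [if_neg]
      rintro ⟨rfl, rfl⟩
      exact h rfl
  | succ L IH =>
    intro X i j
    rw [List.ofFn_succ, List.prod_cons, Matrix.mul_apply]
    set P : (Fin (L + 1) → Fin n) → S :=
      fun ρ' => ∏ k : Fin L, X k.succ (ρ' k.castSucc) (ρ' k.succ) with hP
    -- LHS manipulation
    have lhs_eq : ∀ x : Fin n,
        X 0 i x * ((List.ofFn fun k : Fin L => X k.succ).prod) x j =
        ∑ ρ' : Fin (L + 1) → Fin n,
          if ρ' 0 = x ∧ ρ' (Fin.last L) = j then X 0 i x * P ρ' else 0 := by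
      intro x
      rw [IH (fun k => X k.succ) x j, Finset.mul_sum]
      refine Finset.sum_congr rfl fun ρ' _ => ?_
      split_ifs <;> simp [hP]
    simp_rw [lhs_eq]
    rw [Finset.sum_comm]
    have lhs_eq2 : ∀ ρ' : Fin (L + 1) → Fin n,
        (∑ x : Fin n, if ρ' 0 = x ∧ ρ' (Fin.last L) = j then X 0 i x * P ρ' else 0) =
        if ρ' (Fin.last L) = j then X 0 i (ρ' 0) * P ρ' else 0 := by
      intro ρ'
      rw [Finset.sum_congr rfl (fun x _ => ite_and (ρ' 0 = x) _ _ _),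
        Finset.sum_ite_eq Finset.univ (ρ' 0)
          (fun x => if ρ' (Fin.last L) = j then X 0 i x * P ρ' else 0),
        if_pos (Finset.mem_univ _)]
    simp_rw [lhs_eq2]
    -- RHS manipulation
    rw [← Equiv.sum_comp (Fin.consEquiv (fun _ : Fin (L + 2) => Fin n)), Fintype.sum_prod_type]
    have rhs_eq : ∀ (x : Fin n) (ρ' : Fin (L + 1) → Fin n),
        (if (Fin.consEquiv (fun _ : Fin (L + 2) => Fin n)) (x, ρ') 0 = i ∧
            (Fin.consEquiv (fun _ : Fin (L + 2) => Fin n)) (x, ρ') (Fin.last (L + 1)) = j then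
          ∏ k : Fin (L + 1),
            X k ((Fin.consEquiv (fun _ : Fin (L + 2) => Fin n)) (x, ρ') k.castSucc)
              ((Fin.consEquiv (fun _ : Fin (L + 2) => Fin n)) (x, ρ') k.succ) else 0) =
        if x = i ∧ ρ' (Fin.last L) = j then X 0 x (ρ' 0) * P ρ' else 0 := by
      intro x ρ'
      simp only [Fin.consEquiv_apply]
      have h0 : Fin.cons (α := fun _ : Fin (L + 2) => Fin n) x ρ' 0 = x := rfl
      have hlast : Fin.cons (α := fun _ : Fin (L + 2) => Fin n) x ρ' (Fin.last (L + 1))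
          = ρ' (Fin.last L) := by
        rw [← Fin.succ_last]
        exact Fin.cons_succ (α := fun _ : Fin (L + 2) => Fin n) x ρ' (Fin.last L)
      have hprod : (∏ k : Fin (L + 1),
          X k (Fin.cons (α := fun _ : Fin (L + 2) => Fin n) x ρ' k.castSucc)
            (Fin.cons (α := fun _ : Fin (L + 2) => Fin n) x ρ' k.succ)) =
          X 0 x (ρ' 0) * P ρ' := by
        rw [Fin.prod_univ_succ]
        simp [hP, ← Fin.succ_castSucc]
      rw [h0, hlast, hprod]
    simp_rw [rhs_eq]
    have rhs_eq2 : ∀ x : Fin n,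
        (∑ ρ' : Fin (L + 1) → Fin n,
          if x = i ∧ ρ' (Fin.last L) = j then X 0 x (ρ' 0) * P ρ' else 0) =
        if x = i then
          (∑ ρ' : Fin (L + 1) → Fin n,
            if ρ' (Fin.last L) = j then X 0 i (ρ' 0) * P ρ' else 0) else 0 := by
      intro x
      split_ifs with h
      · subst h
        simp
      · refine Finset.sum_eq_zero fun ρ' _ => if_neg ?_
        rintro ⟨h1, -⟩
        exact h h1
    simp_rw [rhs_eq2]
    rw [Finset.sum_ite_eq' Finset.univ i, if_pos (Finset.mem_univ _)]

/-- Over an interval semiring, the `(i,j)` entry of a product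
`X 0 * ⋯ * X (L-1)` of matrices with unit diagonals is the sum over all block
chains from `i` to `j` of the corresponding products of entries. -/
theorem stmt_9 (S : Type*) [CommSemiring S] (hidem : ∀ a : S, a + a = a)
    (htop : ∀ a : S, a + 1 = 1) (n L : ℕ)
    (X : Fin L → Matrix (Fin n) (Fin n) S) (hX : ∀ k i, X k i i = 1)
    (i j : Fin n) :
    ((List.ofFn X).prod) i j =
      ∑ ρ ∈ Finset.univ.filter (fun ρ : Fin (L + 1) → Fin n =>
          IsBlockChain ρ ∧ ρ 0 = i ∧ ρ (Fin.last L) = j),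
        ∏ k : Fin L, X k (ρ k.castSucc) (ρ k.succ) := by
  rw [pathSum L X i j, ← Finset.sum_filter]
  apply sum_absorb' hidem
  · intro ρ hρ
    rw [Finset.mem_filter] at hρ ⊢
    exact ⟨hρ.1, hρ.2.2⟩
  · intro ρ hρ
    rw [Finset.mem_filter] at hρ
    obtain ⟨σ, hbc, h0, hl, habs⟩ := exists_bc hidem htop X hX
      (Finset.univ.filter fun m : Fin L => ρ m.castSucc ≠ ρ m.succ).card ρ le_rfl
    exact ⟨σ, Finset.mem_filter.mpr ⟨Finset.mem_univ σ,
      hbc, h0.trans hρ.2.1, hl.trans hρ.2.2⟩, habs⟩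
end

section
/- Let S be a commutative semiring and let φ : Σ⁺ → U_n(S) be a semigroup morphism into the monoid of upper unitriangular n×n matrices over S (upper triangular with all diagonal entries 1). Then for any words w, v over Σ: if for every nonempty word u of length at most n−1 the images in S of the scattered-subword multiplicities m_u^w and m_u^v under m ↦ (sum of m copies of 1_S) are equal, then φ(w) = φ(v). -/
section aux

variable {S : Type*} [CommSemiring S] {A : Type*} {n : ℕ}

/-- Path-sum auxiliary function: `auxF φ u i j` is the sum over strictly increasing
chains `i = k₀ < k₁ < ⋯ < k_m = j` of products of the matrix entries of `φ` at the
letters of `u`. -/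
def auxF (φ : A → Matrix (Fin n) (Fin n) S) : List A → Fin n → Fin n → S
  | [], i, j => if i = j then 1 else 0
  | a :: u, i, j => ∑ k : Fin n, if i < k then φ a i k * auxF φ u k j else 0

lemma auxF_eq_zero (φ : A → Matrix (Fin n) (Fin n) S) :
    ∀ (u : List A) (i j : Fin n), (j : ℕ) < (i : ℕ) + u.length → auxF φ u i j = 0 := by
  intro u
  induction u with
  | nil =>
    intro i j hj
    simp only [auxF, List.length_nil, Nat.add_zero] at *
    have : i ≠ j := by
      intro hij; subst hij; exact lt_irrefl _ hj
    simp [this]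
  | cons a u ih =>
    intro i j hj
    simp only [auxF]
    refine Finset.sum_eq_zero fun k _ => ?_
    split_ifs with hk
    · rw [ih k j, mul_zero]
      have : (i : ℕ) < k := hk
      simp only [List.length_cons] at hj
      omega
    · rfl

lemma sum_comm_list {α β : Type*} (l : List α) (s : Finset β) (f : β → α → S) :
    ∑ k ∈ s, (l.map (f k)).sum = (l.map fun u => ∑ k ∈ s, f k u).sum := by
  induction l with
  | nil => simp
  | cons a l ih => simp [Finset.sum_add_distrib, ih]

lemma sum_flatMap_pair {α : Type*} (l : List α) (f g : α → S) :
    (l.flatMap fun x => [f x, g x]).sum = (l.map f).sum + (l.map g).sum := by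
  induction l with
  | nil => simp
  | cons x l ih => simp [ih]; ring

lemma prod_entry (φ : A → Matrix (Fin n) (Fin n) S)
    (hφ : ∀ s, (∀ i, φ s i i = 1) ∧ ∀ i j : Fin n, j < i → φ s i j = 0) :
    ∀ (w : List A) (i j : Fin n),
      (w.map φ).prod i j = (w.sublists.map fun u => auxF φ u i j).sum := by
  intro w
  induction w with
  | nil =>
    intro i j
    simp [auxF, Matrix.one_apply]
  | cons a w ih =>
    intro i j
    have hmul : ((a :: w).map φ).prod i j
        = ∑ k : Fin n, φ a i k * (w.map φ).prod k j := by
      simp [Matrix.mul_apply]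
    rw [hmul]
    have hsplit : ∀ k : Fin n, φ a i k * (w.map φ).prod k j
        = (if i = k then (w.map φ).prod k j else 0)
          + (if i < k then φ a i k * (w.map φ).prod k j else 0) := by
      intro k
      rcases lt_trichotomy i k with hik | hik | hik
      · simp [hik, ne_of_lt hik]
      · subst hik
        simp [(hφ a).1 i]
      · simp [ne_of_gt hik, not_lt.mpr (le_of_lt hik), (hφ a).2 i k hik]
    rw [Finset.sum_congr rfl fun k _ => hsplit k, Finset.sum_add_distrib,
      Finset.sum_ite_eq (Finset.univ : Finset (Fin n)) i (fun k => (w.map φ).prod k j)]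
    simp only [Finset.mem_univ, if_true]
    have h2 : (∑ k : Fin n, if i < k then φ a i k * (w.map φ).prod k j else 0)
        = (w.sublists.map fun u => auxF φ (a :: u) i j).sum := by
      have heach : ∀ k : Fin n, (if i < k then φ a i k * (w.map φ).prod k j else 0)
          = (w.sublists.map fun u => if i < k then φ a i k * auxF φ u k j else 0).sum := by
        intro k
        split_ifs with hk
        · rw [ih k j, ← List.sum_map_mul_left]
        · simp
      rw [Finset.sum_congr rfl fun k _ => heach k, sum_comm_list]
      rfl
    rw [ih i j, h2]
    rw [List.sublists_cons, List.bind_eq_flatMap, List.map_flatMap]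
    have : (fun x => List.map (fun u => auxF φ u i j) [x, a :: x])
        = fun x => [auxF φ x i j, auxF φ (a :: x) i j] := by
      funext x; simp
    rw [this, sum_flatMap_pair]

lemma count_nil_sublists [DecidableEq A] (l : List A) :
    l.sublists.count ([] : List A) = 1 := by
  induction l with
  | nil => simp
  | cons a l ih =>
    rw [List.sublists_cons, List.bind_eq_flatMap, List.count_flatMap]
    have h1 : (List.count ([] : List A) ∘ fun x => [x, a :: x])
        = fun x => List.count ([] : List A) [x] := by
      funext x
      simp [List.count_cons, Function.comp]
    rw [h1]
    have h2 : ∀ t : List (List A),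
        (t.map fun x => List.count ([] : List A) [x]).sum = t.count ([] : List A) := by
      intro t
      induction t with
      | nil => simp
      | cons b t iht =>
        simp only [List.map_cons, List.sum_cons, iht]
        rcases eq_or_ne b ([] : List A) with rfl | hb
        · simp [List.count_cons, Nat.add_comm]
        · simp [List.count_cons, hb, Ne.symm hb]
    rw [h2, ih]

lemma my_sum_count {α : Type*} [DecidableEq α] (l : List (List α)) (f : List α → S) :
    (l.map f).sum = ∑ m ∈ l.toFinset, l.count m • f m := by
  induction l with
  | nil => simp
  | cons a l ih =>
    simp only [List.map_cons, List.sum_cons, List.toFinset_cons, ih]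
    by_cases has : a ∈ l.toFinset
    · rw [Finset.insert_eq_of_mem has, ← Finset.insert_erase has,
        Finset.sum_insert (Finset.notMem_erase _ _),
        Finset.sum_insert (Finset.notMem_erase _ _), ← add_assoc, List.count_cons_self,
        succ_nsmul]
      · congr 1
        · ring
        · refine Finset.sum_congr rfl fun m hm => ?_
          rw [List.count_cons, if_neg]
          · simp
          · intro hma
            exact (Finset.ne_of_mem_erase hm) (eq_of_beq hma).symm
    · rw [Finset.sum_insert (by simpa using has), List.count_cons_self,
        List.count_eq_zero_of_not_mem (by simpa using has), succ_nsmul, zero_nsmul, zero_add]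
      congr 1
      refine Finset.sum_congr rfl fun m hm => ?_
      rw [List.count_cons, if_neg]
      · simp
      · intro hma
        exact has (by rw [eq_of_beq hma]; exact hm)

end aux

/-- If the images in `S` of the scattered-subword multiplicities of all
nonempty words of length at most `n-1` in `w` and in `v` agree, then every
morphism into the upper unitriangular matrices `U_n(S)` identifies `w` and
`v`. Here `φ` is given on letters and extended multiplicatively. -/
theorem stmt_11 (S : Type*) [CommSemiring S] (A : Type*) [DecidableEq A]
    (n : ℕ) (φ : A → Matrix (Fin n) (Fin n) S)
    (hφ : ∀ s, (∀ i, φ s i i = 1) ∧ ∀ i j : Fin n, j < i → φ s i j = 0)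
    (w v : List A) (hw : w ≠ []) (hv : v ≠ [])
    (h : ∀ u : List A, u ≠ [] → u.length ≤ n - 1 →
        ((w.sublists.count u : ℕ) : S) = ((v.sublists.count u : ℕ) : S)) :
    (w.map φ).prod = (v.map φ).prod := by
  ext i j
  rw [prod_entry φ hφ w i j, prod_entry φ hφ v i j]
  set T : Finset (List A) := w.sublists.toFinset ∪ v.sublists.toFinset with hT
  have key : ∀ (l : List A), l.sublists.toFinset ⊆ T →
      (l.sublists.map fun u => auxF φ u i j).sum
        = ∑ u ∈ T, (l.sublists.count u : ℕ) • auxF φ u i j := by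
    intro l hl
    rw [my_sum_count]
    apply Finset.sum_subset hl
    intro u _ hu
    rw [List.count_eq_zero_of_not_mem (fun hm => hu (List.mem_toFinset.mpr hm))]
    exact zero_nsmul _
  rw [key w Finset.subset_union_left, key v Finset.subset_union_right]
  refine Finset.sum_congr rfl fun u _ => ?_
  rcases eq_or_ne u [] with rfl | hu
  · rw [count_nil_sublists, count_nil_sublists]
  · rcases le_or_gt u.length (n - 1) with hlen | hlen
    · rw [nsmul_eq_mul, nsmul_eq_mul, h u hu hlen]
    · have hn : 0 < n := i.pos
      have hz : auxF φ u i j = 0 := auxF_eq_zero φ u i j (by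
        have := j.isLt
        omega)
      rw [hz, smul_zero, smul_zero]
end

section
/- Let S be a commutative semiring and let n ≥ 2. The identity w = v over alphabet Σ holds in the monoid U_n(S) of n×n upper unitriangular matrices over S if and only if for every nonempty word u of length at most n−1, the m_u^w-fold sum of 1_S equals the m_u^v-fold sum of 1_S, where m_u^w denotes the number of occurrences of u as a scattered subword of w. -/
section Aux

variable {S : Type*} [CommSemiring S] {A : Type*} [DecidableEq A] {n : ℕ}

/-- Sum over strictly increasing chains from `i` to `j` of products of entries. -/
def chainC (φ : A → Matrix (Fin n) (Fin n) S) : List A → Fin n → Fin n → S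
  | [], i, j => if i = j then 1 else 0
  | (a :: u), i, j => ∑ k ∈ Finset.Ioi i, φ a i k * chainC φ u k j

lemma count_beq_congr {α : Type*} [DecidableEq α] (inst : BEq α) (hl : @LawfulBEq α inst)
    (a : α) (l : List α) :
    @List.count α inst a l = @List.count α instBEqOfDecidableEq a l := by
  induction l with
  | nil => rfl
  | cons b t ih =>
    rw [@List.count_cons α inst, @List.count_cons α instBEqOfDecidableEq, ih]
    congr 1
    by_cases h : b = a
    · rw [if_pos ((@beq_iff_eq α inst hl b a).mpr h),
        if_pos ((@beq_iff_eq α instBEqOfDecidableEq inferInstance b a).mpr h)]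
    · rw [if_neg (fun hb => h ((@beq_iff_eq α inst hl b a).mp hb)),
        if_neg (fun hb => h ((@beq_iff_eq α instBEqOfDecidableEq inferInstance b a).mp hb))]

lemma count_bridge {A : Type*} [DecidableEq A] (u l : List A) :
    l.sublists.count u = @List.count (List A) instBEqOfDecidableEq u l.sublists' := by
  rw [count_beq_congr _ inferInstance]
  have := (List.sublists_perm_sublists' l).count_eq u
  simp only [count_beq_congr List.instBEq inferInstance] at this
  exact this

lemma count_nil_sublists' {A : Type*} (inst : BEq (List A)) (hl : @LawfulBEq (List A) inst)
    (l : List A) : @List.count (List A) inst [] l.sublists' = 1 := by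
  induction l with
  | nil => simp [List.count_cons, (@beq_iff_eq (List A) inst hl [] []).mpr rfl]
  | cons a t ih =>
    rw [List.sublists'_cons, List.count_append, ih]
    have h0 : @List.count (List A) inst [] (t.sublists'.map (List.cons a)) = 0 := by
      exact (@List.count_eq_zero (List A) inst hl [] _).mpr (by
        intro hmem
        obtain ⟨x, _, hx⟩ := List.mem_map.mp hmem
        exact List.cons_ne_nil a x hx)
    rw [h0]

lemma list_sum_indicator {β : Type*} [DecidableEq β] (l : List β) (b : β) :
    (l.map fun x => if x = b then (1 : S) else 0).sum = ((l.count b : ℕ) : S) := by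
  induction l with
  | nil => simp
  | cons x xs ih =>
    by_cases h : x = b <;> simp [List.count_cons, h, ih, add_comm]

lemma list_sum_finset_sum {β γ : Type*} (l : List β) (T : Finset γ) (g : γ → β → S) :
    (l.map fun x => ∑ k ∈ T, g k x).sum = ∑ k ∈ T, (l.map (g k)).sum := by
  induction l with
  | nil => simp
  | cons x xs ih => simp [ih, Finset.sum_add_distrib]

lemma chainC_eq_zero (φ : A → Matrix (Fin n) (Fin n) S) (u : List A) :
    ∀ i j : Fin n, (j : ℕ) < (i : ℕ) + u.length → chainC φ u i j = 0 := by
  induction u with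
  | nil =>
    intro i j h
    simp only [List.length_nil, Nat.add_zero] at h
    simp [chainC, Fin.ext_iff, (Nat.ne_of_lt h).symm]
  | cons a t ih =>
    intro i j h
    simp only [List.length_cons] at h
    rw [chainC]
    apply Finset.sum_eq_zero
    intro k hk
    rw [Finset.mem_Ioi] at hk
    have hik : (i : ℕ) < (k : ℕ) := hk
    rw [ih k j (by omega), mul_zero]

lemma prod_eq_chain_sum (φ : A → Matrix (Fin n) (Fin n) S)
    (hφ : ∀ s, (∀ i, φ s i i = 1) ∧ ∀ i j : Fin n, j < i → φ s i j = 0)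
    (w : List A) (i j : Fin n) :
    (w.map φ).prod i j = (w.sublists'.map fun u => chainC φ u i j).sum := by
  induction w generalizing i with
  | nil => simp [chainC, Matrix.one_apply]
  | cons a t ih =>
    have hmul : (( (a :: t).map φ).prod) i j
        = ∑ k : Fin n, φ a i k * ((t.map φ).prod) k j := by
      simp [Matrix.mul_apply]
    rw [hmul]
    have hsplit : ∑ k : Fin n, φ a i k * ((t.map φ).prod) k j
        = ((t.map φ).prod) i j + ∑ k ∈ Finset.Ioi i, φ a i k * ((t.map φ).prod) k j := by
      rw [← Finset.add_sum_erase _ _ (Finset.mem_univ i), (hφ a).1 i, one_mul]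
      congr 1
      refine (Finset.sum_subset ?_ ?_).symm
      · intro k hk
        rw [Finset.mem_Ioi] at hk
        simp [Fin.ne_of_gt hk]
      · intro k hk hk2
        rw [Finset.mem_erase] at hk
        rw [Finset.mem_Ioi] at hk2
        have : k < i := lt_of_le_of_ne (not_lt.mp hk2) hk.1
        rw [(hφ a).2 i k this, zero_mul]
    rw [hsplit, List.sublists'_cons, List.map_append, List.sum_append, ih i]
    congr 1
    rw [List.map_map]
    have hcomp : ((fun u => chainC φ u i j) ∘ List.cons a)
        = fun u => ∑ k ∈ Finset.Ioi i, φ a i k * chainC φ u k j := by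
      funext u; rfl
    rw [hcomp, list_sum_finset_sum]
    refine Finset.sum_congr rfl fun k _ => ?_
    rw [ih k, ← List.sum_map_mul_left]

end Aux

/-- For `n ≥ 2`, the identity `w = v` holds in the monoid `U_n(S)` of upper
unitriangular matrices over a commutative semiring `S` iff for every nonempty
word `u` of length at most `n-1`, the `m_u^w`-fold and `m_u^v`-fold sums of
`1_S` agree, where `m_u^w` is the number of occurrences of `u` as a scattered
subword of `w`. -/
theorem stmt_12 (S : Type*) [CommSemiring S] (A : Type*) [DecidableEq A]
    (n : ℕ) (hn : 2 ≤ n) (w v : List A) (hw : w ≠ []) (hv : v ≠ []) :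
    (∀ φ : A → Matrix (Fin n) (Fin n) S,
        (∀ s, (∀ i, φ s i i = 1) ∧ ∀ i j : Fin n, j < i → φ s i j = 0) →
        (w.map φ).prod = (v.map φ).prod) ↔
    (∀ u : List A, u ≠ [] → u.length ≤ n - 1 →
        ((w.sublists.count u : ℕ) : S) = ((v.sublists.count u : ℕ) : S)) := by
  constructor
  · -- identity holds → counts agree
    intro hid u hu hulen
    have hrn : u.length < n := by omega
    set i0 : Fin n := ⟨0, by omega⟩ with hi0
    set jr : Fin n := ⟨u.length, hrn⟩ with hjr
    have hi0v : (i0 : ℕ) = 0 := rfl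
    have hjrv : (jr : ℕ) = u.length := rfl
    -- the witness morphism
    set φ : A → Matrix (Fin n) (Fin n) S := fun a => Matrix.of fun i j =>
      if i = j then 1 else if (j : ℕ) = (i : ℕ) + 1 ∧ u[(i : ℕ)]? = some a then 1 else 0
      with hφdef
    have hφ : ∀ s, (∀ i, φ s i i = 1) ∧ ∀ i j : Fin n, j < i → φ s i j = 0 := by
      intro s
      constructor
      · intro i; simp [hφdef]
      · intro i j hji
        have h1 : i ≠ j := Fin.ne_of_gt hji
        have h2 : ¬((j : ℕ) = (i : ℕ) + 1) := by
          have : (j : ℕ) < (i : ℕ) := hji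
          omega
        simp [hφdef, h1, h2]
    -- chainC for this φ detects contiguous factors of u
    have key : ∀ (u' : List A) (p q : Fin n),
        chainC φ u' p q
          = if (q : ℕ) = (p : ℕ) + u'.length ∧ u' <+: u.drop p then 1 else 0 := by
      intro u'
      induction u' with
      | nil =>
        intro p q
        rw [chainC]
        by_cases h : p = q
        · subst h; simp
        · have : ¬((q : ℕ) = (p : ℕ)) := fun hh => h (Fin.ext hh.symm)
          simp [h, this]
      | cons a t ih =>
        intro p q
        rw [chainC]
        by_cases hp : (p : ℕ) + 1 < n
        · set k0 : Fin n := ⟨(p : ℕ) + 1, hp⟩ with hk0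
          have hk0v : (k0 : ℕ) = (p : ℕ) + 1 := rfl
          have hmem : k0 ∈ Finset.Ioi p := by
            rw [Finset.mem_Ioi, Fin.lt_def, hk0v]
            omega
          rw [Finset.sum_eq_single_of_mem k0 hmem (fun b hb hbk => ?_)]
          · have hpk : p ≠ k0 := by
              intro hh
              have h' : (p : ℕ) = (p : ℕ) + 1 := congrArg Fin.val hh
              omega
            have hφval : φ a p k0 = if u[(p : ℕ)]? = some a then 1 else 0 := by
              simp [hφdef, hpk, hk0v]
            rw [hφval, ih k0 q]
            simp only [hk0v]
            by_cases hcase : u[(p : ℕ)]? = some a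
            · obtain ⟨hplen, hua⟩ := List.getElem?_eq_some_iff.mp hcase
              have hdrop : u.drop p = a :: u.drop ((p : ℕ) + 1) := by
                rw [List.drop_eq_getElem_cons hplen, hua]
              rw [hdrop]
              have hiff : ((q : ℕ) = (p : ℕ) + 1 + t.length ∧ t <+: u.drop ((p : ℕ) + 1))
                  ↔ ((q : ℕ) = (p : ℕ) + (a :: t).length
                      ∧ a :: t <+: a :: u.drop ((p : ℕ) + 1)) := by
                constructor
                · rintro ⟨h1, h2⟩
                  exact ⟨by simp only [List.length_cons]; omega,
                    List.cons_prefix_cons.mpr ⟨rfl, h2⟩⟩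
                · rintro ⟨h1, h2⟩
                  simp only [List.length_cons] at h1
                  exact ⟨by omega, (List.cons_prefix_cons.mp h2).2⟩
              simp only [hcase, if_true, one_mul]
              rw [if_congr hiff rfl rfl]
            · -- u[p]? ≠ some a : both sides are 0
              simp only [hcase, if_false, zero_mul]
              rw [eq_comm, ite_eq_right_iff]
              rintro ⟨h1, h2⟩
              exfalso
              by_cases hplen : (p : ℕ) < u.length
              · have hdrop : u.drop p = u[(p : ℕ)] :: u.drop ((p : ℕ) + 1) :=
                  List.drop_eq_getElem_cons hplen
                rw [hdrop] at h2
                obtain ⟨hh, _⟩ := List.cons_prefix_cons.mp h2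
                exact hcase (List.getElem?_eq_some_iff.mpr ⟨hplen, hh.symm⟩)
              · have hnil : u.drop p = [] := List.drop_eq_nil_of_le (by omega)
                rw [hnil] at h2
                exact absurd (List.prefix_nil.mp h2) (by simp)
          · -- other summands vanish
            have hbne : ¬((b : ℕ) = (p : ℕ) + 1) := by
              intro hh
              exact hbk (Fin.ext (by rw [hk0v, hh]))
            have hbp : p ≠ b := by
              rw [Finset.mem_Ioi] at hb
              exact Fin.ne_of_lt hb
            have hz : φ a p b = 0 := by simp [hφdef, hbp, hbne]
            rw [hz, zero_mul]
        · -- p is the last index : empty sum, and the condition fails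
          have hsum : ∑ k ∈ Finset.Ioi p, φ a p k * chainC φ t k q = 0 := by
            apply Finset.sum_eq_zero
            intro k hk
            rw [Finset.mem_Ioi, Fin.lt_def] at hk
            have hkn : (k : ℕ) < n := k.isLt
            omega
          rw [hsum, eq_comm, ite_eq_right_iff]
          rintro ⟨h1, _⟩
          exfalso
          have hqn : (q : ℕ) < n := q.isLt
          simp only [List.length_cons] at h1
          omega
    -- evaluate the identity at this φ
    have hpv := congrFun (congrFun (hid φ hφ) i0) jr
    rw [prod_eq_chain_sum φ hφ w i0 jr, prod_eq_chain_sum φ hφ v i0 jr] at hpv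
    have heval : ∀ u' : List A,
        chainC φ u' i0 jr = if u' = u then (1 : S) else 0 := by
      intro u'
      rw [key u' i0 jr]
      have hc : ((jr : ℕ) = (i0 : ℕ) + u'.length ∧ u' <+: u.drop (i0 : ℕ)) ↔ u' = u := by
        rw [hi0v, hjrv, List.drop_zero]
        constructor
        · rintro ⟨h1, h2⟩
          exact h2.eq_of_length (by omega)
        · rintro rfl
          exact ⟨by omega, List.prefix_refl _⟩
      rw [if_congr hc rfl rfl]
    simp only [heval] at hpv
    rw [list_sum_indicator, list_sum_indicator] at hpv
    rw [count_bridge u w, count_bridge u v]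
    exact_mod_cast hpv
  · -- counts agree → identity holds
    intro hcnt φ hφ
    funext i j
    rw [prod_eq_chain_sum φ hφ w i j, prod_eq_chain_sum φ hφ v i j,
      Finset.sum_list_map_count, Finset.sum_list_map_count]
    set T : Finset (List A) := w.sublists'.toFinset ∪ v.sublists'.toFinset with hT
    have hsub1 : w.sublists'.toFinset ⊆ T := Finset.subset_union_left
    have hsub2 : v.sublists'.toFinset ⊆ T := Finset.subset_union_right
    have hz : ∀ (l : List A) (u : List A), u ∉ l.sublists'.toFinset →
        @List.count (List A) instBEqOfDecidableEq u l.sublists' = 0 := by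
      intro l u hu
      exact (@List.count_eq_zero (List A) instBEqOfDecidableEq inferInstance u _).mpr
        (fun hmem => hu (List.mem_toFinset.mpr hmem))
    rw [Finset.sum_subset hsub1 (fun u _ hu => by rw [hz w u hu, zero_smul]),
      Finset.sum_subset hsub2 (fun u _ hu => by rw [hz v u hu, zero_smul])]
    refine Finset.sum_congr rfl fun u hu => ?_
    rw [nsmul_eq_mul, nsmul_eq_mul]
    by_cases hlen : (j : ℕ) < (i : ℕ) + u.length
    · rw [chainC_eq_zero φ u i j hlen, mul_zero, mul_zero]
    · have hjn : (j : ℕ) < n := j.isLt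
      have hulen : u.length ≤ n - 1 := by omega
      rcases eq_or_ne u [] with rfl | hne
      · rw [count_nil_sublists' instBEqOfDecidableEq inferInstance w,
          count_nil_sublists' instBEqOfDecidableEq inferInstance v]
      · have hc := hcnt u hne hulen
        rw [count_bridge u w, count_bridge u v] at hc
        have hcc : @List.count (List A) instBEqOfDecidableEq u w.sublists'
            = @List.count (List A) instBEqOfDecidableEq u v.sublists' → True := fun _ => trivial
        rw [show ((@List.count (List A) instBEqOfDecidableEq u w.sublists' : ℕ) : S)
            = ((@List.count (List A) instBEqOfDecidableEq u v.sublists' : ℕ) : S) from hc]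
end

section
/- The set Conv_n of convex n×n Boolean matrices is closed under matrix multiplication, where a Boolean matrix A is convex if each row's set of 1-entries is an interval, each column's set of 1-entries is an interval, and all diagonal entries equal 1. -/
/-- Multiplication of Boolean matrices (over the Boolean semiring, where
addition is `or` and multiplication is `and`). -/
def boolMul {n : ℕ} (A B : Matrix (Fin n) (Fin n) Bool) :
    Matrix (Fin n) (Fin n) Bool :=
  fun i j => decide (∃ k, A i k = true ∧ B k j = true)

/-- A Boolean matrix is convex if each row's 1-entries form an interval, each
column's 1-entries form an interval, and all diagonal entries equal 1. -/
def IsConvex {n : ℕ} (A : Matrix (Fin n) (Fin n) Bool) : Prop :=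
  (∀ i l r k : Fin n, A i l = true → A i r = true → l ≤ k → k ≤ r → A i k = true) ∧
  (∀ j u d k : Fin n, A u j = true → A d j = true → u ≤ k → k ≤ d → A k j = true) ∧
  (∀ i, A i i = true)

/-- The convex Boolean matrices are closed under matrix multiplication. -/
theorem stmt_15 (n : ℕ) (A B : Matrix (Fin n) (Fin n) Bool)
    (hA : IsConvex A) (hB : IsConvex B) : IsConvex (boolMul A B) := by
  obtain ⟨hAr, hAc, hAd⟩ := hA
  obtain ⟨hBr, hBc, hBd⟩ := hB
  refine ⟨?_, ?_, ?_⟩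
  · intro i l r k hl hr hlk hkr
    simp only [boolMul, decide_eq_true_eq] at *
    obtain ⟨k1, hA1, hB1⟩ := hl
    obtain ⟨k2, hA2, hB2⟩ := hr
    rcases le_total k k1 with h | h
    · exact ⟨k1, hA1, hBr k1 l k1 k hB1 (hBd k1) hlk h⟩
    · rcases le_total k2 k with h' | h'
      · exact ⟨k2, hA2, hBr k2 k2 r k (hBd k2) hB2 h' hkr⟩
      · exact ⟨k, hAr i k1 k2 k hA1 hA2 h h', hBd k⟩
  · intro j u d k hu hd huk hkd
    simp only [boolMul, decide_eq_true_eq] at *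
    obtain ⟨k1, hA1, hB1⟩ := hu
    obtain ⟨k2, hA2, hB2⟩ := hd
    rcases le_total k k1 with h | h
    · exact ⟨k1, hAc k1 u k1 k hA1 (hAd k1) huk h, hB1⟩
    · rcases le_total k2 k with h' | h'
      · exact ⟨k2, hAc k2 k2 d k (hAd k2) hA2 h' hkd, hB2⟩
      · exact ⟨k, hAd k, hBc j k1 k2 k hB1 hB2 h h'⟩
  · intro i
    simp only [boolMul, decide_eq_true_eq]
    exact ⟨i, hAd i, hBd i⟩
end

section
/- The map U sending a convex Boolean matrix A to its upper profile U(A), defined by U(A)_{i,j} = A_{i,j} if i ≤ j and 0 otherwise, is multiplicative on products of convex matrices: U(AB) = U(A)·U(B) for all convex Boolean matrices A, B. -/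
/-- The upper profile of a Boolean matrix. -/
def upperProfile {n : ℕ} (A : Matrix (Fin n) (Fin n) Bool) :
    Matrix (Fin n) (Fin n) Bool :=
  fun i j => if i ≤ j then A i j else false

/-- The upper-profile map is multiplicative on convex Boolean matrices. -/
theorem stmt_18 (n : ℕ) (A B : Matrix (Fin n) (Fin n) Bool)
    (hA : IsConvex A) (hB : IsConvex B) :
    upperProfile (boolMul A B) = boolMul (upperProfile A) (upperProfile B) := by
  obtain ⟨hAr, hAc, hAd⟩ := hA
  obtain ⟨hBr, hBc, hBd⟩ := hB
  funext i j
  simp only [upperProfile, boolMul]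
  by_cases hij : i ≤ j
  · simp only [hij, if_pos, decide_eq_decide]
    refine Bool.eq_iff_iff.mpr ((decide_eq_true_iff).trans (Iff.trans ?_ (decide_eq_true_iff).symm))
    constructor
    · rintro ⟨k, hAik, hBkj⟩
      rcases le_or_gt i k with hik | hik
      · rcases le_or_gt k j with hkj | hkj
        · exact ⟨k, by simp [hik, hAik], by simp [hkj, hBkj]⟩
        · exact ⟨j, by simp [hij, hAr i i k j (hAd i) hAik hij hkj.le],
            by simp [hBd j]⟩
      · exact ⟨i, by simp [hAd i],
          by simp [hij, hBc j k j i hBkj (hBd j) hik.le hij]⟩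
    · rintro ⟨k, hAik, hBkj⟩
      by_cases hik : i ≤ k
      · by_cases hkj : k ≤ j
        · simp [hik] at hAik; simp [hkj] at hBkj; exact ⟨k, hAik, hBkj⟩
        · simp [hkj] at hBkj
      · simp [hik] at hAik
  · simp only [hij, if_neg, not_false_iff]
    symm
    refine decide_eq_false ?_
    rintro ⟨k, hAik, hBkj⟩
    by_cases hik : i ≤ k
    · by_cases hkj : k ≤ j
      · exact hij (hik.trans hkj)
      · simp [hkj] at hBkj
    · simp [hik] at hAik
end

section
/- Let S be a commutative semiring whose multiplicative monoid contains an element generating a free submonoid of rank 1 (i.e., an element α with all powers α^k, k ≥ 0, distinct). Then any non-trivial semigroup identity w = v satisfied by the monoid UT_n(S) of upper triangular n×n matrices over S (n ≥ 1) is balanced: |w|_a = |v|_a for every letter a. -/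
/-- If the commutative semiring `S` contains an element `α` whose powers are
pairwise distinct (a free submonoid of rank 1 in the multiplicative monoid),
then every non-trivial semigroup identity `w = v` satisfied by the monoid
`UT_n(S)` of upper triangular `n × n` matrices (`n ≥ 1`) is balanced. -/
theorem stmt_19 (S : Type*) [CommSemiring S] (α : S)
    (hα : ∀ j k : ℕ, α ^ j = α ^ k → j = k)
    (A : Type*) [DecidableEq A] (n : ℕ) (hn : 1 ≤ n)
    (w v : List A) (hw : w ≠ []) (hv : v ≠ []) (hwv : w ≠ v)
    (hid : ∀ φ : A → Matrix (Fin n) (Fin n) S,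
        (∀ s, ∀ i j : Fin n, j < i → φ s i j = 0) →
        (w.map φ).prod = (v.map φ).prod) :
    ∀ a : A, w.count a = v.count a := by
  intro a
  set φ : A → Matrix (Fin n) (Fin n) S :=
    fun b => if b = a then α • (1 : Matrix (Fin n) (Fin n) S) else 1 with hφ
  have hupper : ∀ s, ∀ i j : Fin n, j < i → φ s i j = 0 := by
    intro s i j hij
    simp only [hφ]
    split
    · simp [Matrix.smul_apply, Matrix.one_apply_ne hij.ne']
    · simp [Matrix.one_apply_ne hij.ne']
  have key : ∀ u : List A,
      (u.map φ).prod = α ^ (u.count a) • (1 : Matrix (Fin n) (Fin n) S) := by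
    intro u
    induction u with
    | nil => simp
    | cons b t ih =>
      simp only [List.map_cons, List.prod_cons, ih, List.count_cons]; simp only [hφ]
      by_cases hb : b = a
      · simp [hb, smul_mul_assoc, mul_smul_comm, smul_smul, pow_succ, mul_comm]
      · simp [hb, Ne.symm hb]
  have h := hid φ hupper
  rw [key w, key v] at h
  have i0 : Fin n := ⟨0, hn⟩
  have h2 : α ^ (w.count a) = α ^ (v.count a) := by
    have := congrFun (congrFun h i0) i0
    simpa [Matrix.smul_apply, Matrix.one_apply_eq] using this
  exact hα _ _ h2
end
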